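/- arXiv:1912.08863 — 4 statements merged into one kernel-verified Lean document; each statement's English description precedes it below -/
import Mathlib

section
/- The value function u : (0,∞) → ℝ ∪ {+∞} of utility maximization with proportional transaction costs is continuous: for every x > 0, u(x) = lim_{y→x} u(y), where the limit is taken in the extended reals (a priori the common value may equal +∞). -/
open MeasureTheory Set Filter
open scoped ENNReal

/-- The (signed) Lebesgue–Stieltjes integral `∫_{[0,t]} S dγ`, where the trading strategy
`γ_u = μ([0,u])` is encoded by its signed Lebesgue–Stieltjes measure `μ` (the convention
`γ_{0−} = 0` means the jump at time `0` is included). -/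
noncomputable def stieltjesIntegral (S : ℝ → ℝ) (μ : SignedMeasure ℝ) (t : ℝ) : ℝ :=
  (∫ u in Icc 0 t, S u ∂μ.toJordanDecomposition.posPart) -
    (∫ u in Icc 0 t, S u ∂μ.toJordanDecomposition.negPart)

/-- The integral `∫_{[0,t]} S |dγ|` against the total variation measure of `γ`. -/
noncomputable def totalVarIntegral (S : ℝ → ℝ) (μ : SignedMeasure ℝ) (t : ℝ) : ℝ :=
  ∫ u in Icc 0 t, S u ∂μ.totalVariation

/-- The portfolio value `V^γ_t = γ_t S_t − ∫_{[0,t]} S dγ − κ|γ_t| S_t − κ ∫_{[0,t]} S |dγ|`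
under proportional transaction costs of rate `κ`, with `γ_u = μ([0,u])`. -/
noncomputable def portfolioValue (κ : ℝ) (S : ℝ → ℝ) (μ : SignedMeasure ℝ) (t : ℝ) : ℝ :=
  μ (Icc 0 t) * S t - stieltjesIntegral S μ t - κ * |μ (Icc 0 t)| * S t -
    κ * totalVarIntegral S μ t

/-- The positive part of an extended real number, as an element of `ℝ≥0∞`. -/
noncomputable def erealPos (y : EReal) : ℝ≥0∞ :=
  if y = ⊤ then ⊤ else ENNReal.ofReal y.toReal

/-- The expectation `E[X]` of an extended-real random variable, with the convention
`E[X] := −∞` whenever `E[max(−X,0)] = ∞` (as in the paper). -/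
noncomputable def eExp {Ω : Type} [MeasurableSpace Ω] (P : Measure Ω) (X : Ω → EReal) :
    EReal :=
  ((∫⁻ ω, erealPos (X ω) ∂P : ℝ≥0∞) : EReal) - ((∫⁻ ω, erealPos (-(X ω)) ∂P : ℝ≥0∞) : EReal)


/-!
Multiplying an admissible strategy for the initial capital `y` by `1 - λ` gives an admissible
strategy for `(1 - λ) y` whose terminal wealth is `(1 - λ)` times the old one, so Assumption (ii)
yields `(1 - m₁(λ)) u(y) - 2 m₂(λ) E[ζ] ≤ u((1 - λ) y)`. As `u` is nondecreasing and
`m₁(λ), m₂(λ) → 0` when `λ ↓ 0`, this squeezes `u` at every `x > 0`: from below with `y = x`,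
from above with `y = x / (1 - λ)`.
-/

open scoped Topology NNReal

namespace EReal

lemma tendsto_coe_mul_sub {β : Type*} {f : Filter β} {c d : β → ℝ} {e : β → EReal}
    {c₀ d₀ : ℝ} {e₀ : EReal} (hc₀ : c₀ ≠ 0) (hc : Tendsto c f (𝓝 c₀))
    (he : Tendsto e f (𝓝 e₀)) (hd : Tendsto d f (𝓝 d₀)) :
    Tendsto (fun b => (c b : EReal) * e b - d b) f (𝓝 ((c₀ : EReal) * e₀ - d₀)) := by
  have hmul : Tendsto (fun b => (c b : EReal) * e b) f (𝓝 ((c₀ : EReal) * e₀)) := by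
    refine (continuousAt_mul ?_ ?_ ?_ ?_).tendsto.comp
      ((continuous_coe_real_ereal.tendsto c₀ |>.comp hc).prodMk_nhds he) <;>
      simp [hc₀]
  exact (continuousAt_add (by simp) (by simp)).tendsto.comp
    (hmul.prodMk_nhds (continuous_coe_real_ereal.tendsto (-d₀) |>.comp hd.neg))

lemma monotone_coe_mul_sub {c : ℝ} (hc : 0 ≤ c) (d : ℝ) :
    Monotone fun e : EReal => (c : EReal) * e - d :=
  fun _ _ h => sub_le_sub (mul_le_mul_of_nonneg_left h (by exact_mod_cast hc)) le_rfl

lemma continuous_coe_mul_sub {c : ℝ} (hc : c ≠ 0) (d : ℝ) :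
    Continuous fun e : EReal => (c : EReal) * e - d :=
  continuous_iff_continuousAt.2 fun _ =>
    tendsto_coe_mul_sub hc tendsto_const_nhds tendsto_id tendsto_const_nhds

lemma coe_mul_iSup_sub_le {ι : Sort*} {c : ℝ} (hc : 0 < c) (d : ℝ) {g : ι → EReal} {a : EReal}
    (h : ∀ i, (c : EReal) * g i - d ≤ a) : (c : EReal) * (⨆ i, g i) - d ≤ a := by
  rw [(monotone_coe_mul_sub hc.le d).map_iSup_of_continuousAt
    (continuous_coe_mul_sub hc.ne' d).continuousAt
    (by simp [coe_mul_bot_of_pos hc])]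
  exact iSup_le h

end EReal

@[simp] lemma erealPos_top : erealPos ⊤ = ⊤ := by simp [erealPos]

@[simp] lemma erealPos_bot : erealPos ⊥ = 0 := by simp [erealPos]

@[simp] lemma erealPos_coe (x : ℝ) : erealPos x = ENNReal.ofReal x := by simp [erealPos]

lemma erealPos_mono : Monotone erealPos := by
  intro x y h
  induction y using EReal.rec with
  | bot => simp [le_bot_iff.1 h]
  | top => simp
  | coe y =>
    induction x using EReal.rec with
    | bot => simp
    | top => simp at h
    | coe x => simpa using ENNReal.ofReal_le_ofReal (EReal.coe_le_coe_iff.1 h)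

lemma erealPos_coe_mul {c : ℝ} (hc : 0 < c) (x : EReal) :
    erealPos (c * x) = ENNReal.ofReal c * erealPos x := by
  induction x using EReal.rec with
  | bot => simp [EReal.coe_mul_bot_of_pos hc]
  | coe x => simp [← EReal.coe_mul, ENNReal.ofReal_mul hc.le]
  | top => simp [EReal.coe_mul_top_of_pos hc, ENNReal.mul_top, hc]

lemma erealPos_le_erealPos_sub_add (x : EReal) (g : ℝ) :
    erealPos x ≤ erealPos (x - g) + ENNReal.ofReal g := by
  induction x using EReal.rec with
  | bot => simp
  | coe x => simpa [← EReal.coe_sub] using ENNReal.ofReal_add_le (p := x - g) (q := g)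
  | top => simp

lemma erealPos_neg_sub_le (x : EReal) (g : ℝ) :
    erealPos (-(x - g)) ≤ erealPos (-x) + ENNReal.ofReal g := by
  induction x using EReal.rec with
  | bot => simp
  | coe x =>
    rw [← EReal.coe_sub, ← EReal.coe_neg, ← EReal.coe_neg, erealPos_coe, erealPos_coe, neg_sub,
      sub_eq_neg_add]
    exact ENNReal.ofReal_add_le
  | top => simp

lemma eExp_mono {Ω : Type} [MeasurableSpace Ω] (P : Measure Ω) {X Y : Ω → EReal}
    (h : ∀ᵐ ω ∂P, X ω ≤ Y ω) : eExp P X ≤ eExp P Y :=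
  EReal.sub_le_sub
    (EReal.coe_ennreal_le_coe_ennreal_iff.2 <|
      lintegral_mono_ae (h.mono fun _ hω => erealPos_mono hω))
    (EReal.coe_ennreal_le_coe_ennreal_iff.2 <|
      lintegral_mono_ae (h.mono fun _ hω => erealPos_mono (EReal.neg_le_neg_iff.2 hω)))

lemma coe_mul_sub_sub_le_sub_of_le {c : ℝ} (hc : 0 < c) {a b p q : ℝ≥0∞} {G : ℝ} (hG : 0 ≤ G)
    (hp : ENNReal.ofReal c * a ≤ p + ENNReal.ofReal G)
    (hq : q ≤ ENNReal.ofReal c * b + ENNReal.ofReal G) :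
    (c : EReal) * ((a : EReal) - b) - (2 * G : ℝ) ≤ (p : EReal) - q := by
  rcases eq_or_ne b ⊤ with rfl | hb
  · simp [EReal.coe_mul_bot_of_pos hc]
  have hq' : q ≠ ⊤ := ne_top_of_le_ne_top (by finiteness) hq
  rcases eq_or_ne p ⊤ with rfl | hp'
  · lift q to ℝ≥0 using hq'
    simp [EReal.coe_nnreal_eq_coe_real]
  have ha : a ≠ ⊤ := by
    contrapose! hp'
    simpa [hp', ENNReal.mul_top, hc] using hp
  lift a to ℝ≥0 using ha
  lift b to ℝ≥0 using hb
  lift p to ℝ≥0 using hp'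
  lift q to ℝ≥0 using hq'
  rw [ENNReal.ofReal, ENNReal.ofReal, ← ENNReal.coe_mul, ← ENNReal.coe_add, ENNReal.coe_le_coe,
    ← NNReal.coe_le_coe] at hp hq
  push_cast [Real.coe_toNNReal _ hc.le, Real.coe_toNNReal _ hG] at hp hq
  simp only [EReal.coe_nnreal_eq_coe_real]
  norm_cast
  nlinarith

-- The factor `2` appears because the positive and the negative part are estimated separately.
lemma eExp_coe_mul_sub_le {Ω : Type} [MeasurableSpace Ω] (P : Measure Ω) (X : Ω → EReal)
    {c : ℝ} (hc : 0 < c) {g : Ω → ℝ} (hg0 : ∀ ω, 0 ≤ g ω) (hg : Integrable g P) :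
    (c : EReal) * eExp P X - ((2 * ∫ ω, g ω ∂P : ℝ) : EReal) ≤
      eExp P fun ω => (c : EReal) * X ω - g ω := by
  have hG : ∫⁻ ω, ENNReal.ofReal (g ω) ∂P = ENNReal.ofReal (∫ ω, g ω ∂P) :=
    (ofReal_integral_eq_lintegral_ofReal hg (.of_forall hg0)).symm
  have hg' : AEMeasurable (fun ω => ENNReal.ofReal (g ω)) P :=
    hg.aemeasurable.ennreal_ofReal
  have hp : ENNReal.ofReal c * ∫⁻ ω, erealPos (X ω) ∂P ≤
      ∫⁻ ω, erealPos (c * X ω - g ω) ∂P + ENNReal.ofReal (∫ ω, g ω ∂P) := by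
    rw [← lintegral_const_mul' _ _ ENNReal.ofReal_ne_top, ← hG, ← lintegral_add_right' _ hg']
    exact lintegral_mono fun ω =>
      (erealPos_coe_mul hc (X ω)).symm.trans_le (erealPos_le_erealPos_sub_add _ _)
  have hq : ∫⁻ ω, erealPos (-(c * X ω - g ω)) ∂P ≤
      ENNReal.ofReal c * ∫⁻ ω, erealPos (-X ω) ∂P + ENNReal.ofReal (∫ ω, g ω ∂P) := by
    rw [← lintegral_const_mul' _ _ ENNReal.ofReal_ne_top, ← hG, ← lintegral_add_right' _ hg']
    refine lintegral_mono fun ω => (erealPos_neg_sub_le _ _).trans_eq ?_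
    rw [← erealPos_coe_mul hc, mul_neg]
  simpa only [eExp] using coe_mul_sub_sub_le_sub_of_le hc (integral_nonneg hg0) hp hq

lemma ContinuousOn.tendsto_nhdsGT_of_Ico {α : Type*} [TopologicalSpace α] {f : ℝ → α}
    {a b : ℝ} (hab : a < b) (hf : ContinuousOn f (Ico a b)) : Tendsto f (𝓝[>] a) (𝓝 (f a)) :=
  ((continuousWithinAt_Ico_iff_Ici hab).1 (hf a ⟨le_rfl, hab⟩)).mono Ioi_subset_Ici_self

lemma MonotoneOn.Ici_of_tendsto_nhdsGT {α : Type*} [LinearOrder α] [TopologicalSpace α]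
    [OrderClosedTopology α] {f : ℝ → α} {a : ℝ} (hf : MonotoneOn f (Ioi a))
    (ha : Tendsto f (𝓝[>] a) (𝓝 (f a))) : MonotoneOn f (Ici a) := by
  intro v hv w hw hvw
  rcases (mem_Ici.1 hv).eq_or_lt with rfl | hv
  · rcases (mem_Ici.1 hw).eq_or_lt with rfl | hw
    · exact le_rfl
    · refine le_of_tendsto ha ?_
      filter_upwards [Ioo_mem_nhdsGT hw] with z hz using hf hz.1 hw hz.2.le
  · exact hf hv (hv.trans_le hvw) hvw

lemma ae_forall_le_of_continuousWithinAt {Ω α : Type*} [MeasurableSpace Ω] {P : Measure Ω}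
    [LinearOrder α] [TopologicalSpace α] [OrderClosedTopology α] {f g : Ω → ℝ → α} {a : ℝ}
    (hf : ∀ ω, ∀ v ∈ Ici a, ContinuousWithinAt (f ω) (Ioi a) v)
    (hg : ∀ ω, ∀ v ∈ Ici a, ContinuousWithinAt (g ω) (Ioi a) v)
    (h : ∀ v ∈ Ioi a, ∀ᵐ ω ∂P, f ω v ≤ g ω v) : ∀ᵐ ω ∂P, ∀ v ∈ Ici a, f ω v ≤ g ω v := by
  have hQ : ∀ᵐ ω ∂P, ∀ q : {q : ℚ // a < q}, f ω q ≤ g ω q := ae_all_iff.2 fun q => h q q.2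
  have hdense : Ici a ⊆ closure (Ioi a ∩ range ((↑) : ℚ → ℝ)) := by
    rw [← closure_Ioi]
    exact closure_minimal (Rat.denseRange_cast.open_subset_closure_inter isOpen_Ioi)
      isClosed_closure
  filter_upwards [hQ] with ω hω v hv
  refine ContinuousWithinAt.closure_le (hdense hv) ((hf ω v hv).mono inter_subset_left)
    ((hg ω v hv).mono inter_subset_left) ?_
  rintro _ ⟨hq, q, rfl⟩
  exact hω ⟨q, hq⟩

lemma ae_forall_coe_mul_sub_le_of_continuousWithinAt {Ω : Type*} [MeasurableSpace Ω]
    {P : Measure Ω} {W : Ω → ℝ → EReal}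
    (hW : ∀ ω, ∀ v ∈ Ici (0:ℝ), ContinuousWithinAt (W ω) (Ioi 0) v) {c θ : ℝ} (hc : c ≠ 0)
    (hθ : 0 < θ) {g : Ω → ℝ}
    (h : ∀ v, 0 < v → ∀ᵐ ω ∂P, (c : EReal) * W ω v - g ω ≤ W ω (θ * v)) :
    ∀ᵐ ω ∂P, ∀ v, 0 ≤ v → (c : EReal) * W ω v - g ω ≤ W ω (θ * v) := by
  refine ae_forall_le_of_continuousWithinAt (fun ω v hv => ?_) (fun ω v hv => ?_) h
  · exact EReal.tendsto_coe_mul_sub hc tendsto_const_nhds (hW ω v hv) tendsto_const_nhds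
  · exact (hW ω _ (mul_nonneg hθ.le hv)).comp (continuousWithinAt_id.const_mul _)
      fun w hw => mul_pos hθ hw

lemma continuousAt_of_coe_mul_sub_le {u : ℝ → EReal} (hu : MonotoneOn u (Ioi 0))
    {c K : ℝ → ℝ} (hc : Tendsto c (𝓝[>] 0) (𝓝 1)) (hK : Tendsto K (𝓝[>] 0) (𝓝 0))
    (hscale : ∀ᶠ l in 𝓝[>] 0, ∀ y, 0 < y → (c l : EReal) * u y - K l ≤ u ((1 - l) * y))
    {x : ℝ} (hx : 0 < x) : ContinuousAt u x := by
  have hlim (e : EReal) : Tendsto (fun l => (c l : EReal) * e - K l) (𝓝[>] 0) (𝓝 e) := by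
    simpa using EReal.tendsto_coe_mul_sub one_ne_zero hc tendsto_const_nhds hK
  have hsmall : ∀ᶠ l in 𝓝[>] (0:ℝ), l ∈ Ioo 0 1 := Ioo_mem_nhdsGT one_pos
  refine tendsto_order.2 ⟨fun a ha => ?_, fun b hb => ?_⟩
  · obtain ⟨l, hl, hla, hl01⟩ :=
      (hscale.and (((hlim (u x)).eventually (lt_mem_nhds ha)).and hsmall)).exists
    have hlx : (1 - l) * x < x := by nlinarith [hl01.1]
    have hlx0 : 0 < (1 - l) * x := mul_pos (by linarith [hl01.2]) hx
    filter_upwards [Ioi_mem_nhds hlx] with y hy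
    exact hla.trans_le ((hl x hx).trans (hu hlx0 (hlx0.trans hy) hy.le))
  · obtain ⟨l, hl, hlb, hcl, hl01⟩ := (hscale.and (((hlim b).eventually (lt_mem_nhds hb)).and
      ((hc.eventually (lt_mem_nhds one_pos)).and hsmall))).exists
    have hl1 : 0 < 1 - l := by linarith [hl01.2]
    set z := x / (1 - l)
    have hz : (1 - l) * z = x := mul_div_cancel₀ x hl1.ne'
    have hz0 : 0 < z := div_pos hx hl1
    have hxz : x < z := by nlinarith [hl01.1]
    have huz : u z < b := by
      by_contra! hbz
      have := (EReal.monotone_coe_mul_sub hcl.le (K l) hbz).trans (hl z hz0)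
      rw [hz] at this
      exact (this.trans_lt hlb).false
    filter_upwards [Iio_mem_nhds hxz, Ioi_mem_nhds hx] with y hyz hy0
    exact (hu hy0 hz0 hyz.le).trans_lt huz

lemma setIntegral_toNNReal_smul_measure (f : ℝ → ℝ) (ν : Measure ℝ) (s : Set ℝ) {c : ℝ}
    (hc : 0 ≤ c) : ∫ u in s, f u ∂(c.toNNReal • ν) = c * ∫ u in s, f u ∂ν := by
  rw [Measure.restrict_smul, integral_smul_nnreal_measure, NNReal.smul_def, smul_eq_mul,
    Real.coe_toNNReal _ hc]

lemma portfolioValue_smul (κ : ℝ) (S : ℝ → ℝ) (μ : SignedMeasure ℝ) {c : ℝ} (hc : 0 ≤ c)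
    (t : ℝ) : portfolioValue κ S (c • μ) t = c * portfolioValue κ S μ t := by
  have hjd := μ.toJordanDecomposition_smul_real c
  have hpos : (c • μ).toJordanDecomposition.posPart =
      c.toNNReal • μ.toJordanDecomposition.posPart := by
    rw [hjd, JordanDecomposition.real_smul_posPart_nonneg _ _ hc]
  have hneg : (c • μ).toJordanDecomposition.negPart =
      c.toNNReal • μ.toJordanDecomposition.negPart := by
    rw [hjd, JordanDecomposition.real_smul_negPart_nonneg _ _ hc]
  have htv : (c • μ).totalVariation = c.toNNReal • μ.totalVariation := by
    rw [SignedMeasure.totalVariation, hpos, hneg, SignedMeasure.totalVariation, smul_add]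
  simp only [portfolioValue, stieltjesIntegral, totalVarIntegral, hpos, hneg, htv,
    setIntegral_toNNReal_smul_measure _ _ _ hc, _root_.smul_apply, smul_eq_mul, abs_mul,
    abs_of_nonneg hc]
  ring

section ValueFunction

variable {Ω : Type} [m0 : MeasurableSpace Ω] (P : Measure Ω) (F : Filtration ℝ m0) (T κ : ℝ)
  (S : Ω → ℝ → ℝ) (W : Ω → ℝ → EReal)

def IsAdmissible (y : ℝ) (μ : Ω → SignedMeasure ℝ) : Prop :=
  (∀ t ∈ Icc (0:ℝ) T, Measurable[F t] fun ω => (μ ω) (Icc 0 t)) ∧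
  (∀ ω, (μ ω) (Icc 0 T) = 0) ∧
  (∀ᵐ ω ∂P, ∀ t ∈ Icc (0:ℝ) T, 0 ≤ y + portfolioValue κ (S ω) (μ ω) t)

noncomputable def valueFunction (y : ℝ) : EReal :=
  ⨆ (μ : Ω → SignedMeasure ℝ) (_ : IsAdmissible P F T κ S y μ),
    eExp P fun ω => W ω (y + portfolioValue κ (S ω) (μ ω) T)

variable {P F T κ S W}

lemma IsAdmissible.mono {y z : ℝ} {μ : Ω → SignedMeasure ℝ}
    (h : IsAdmissible P F T κ S y μ) (hyz : y ≤ z) : IsAdmissible P F T κ S z μ :=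
  ⟨h.1, h.2.1, h.2.2.mono fun _ hω t ht => (hω t ht).trans (by linarith)⟩

lemma IsAdmissible.smul {y θ : ℝ} {μ : Ω → SignedMeasure ℝ}
    (h : IsAdmissible P F T κ S y μ) (hθ : 0 ≤ θ) :
    IsAdmissible P F T κ S (θ * y) fun ω => θ • μ ω := by
  refine ⟨fun t ht => (h.1 t ht).const_mul θ, fun ω => by simp [h.2.1 ω], ?_⟩
  filter_upwards [h.2.2] with ω hω t ht
  rw [portfolioValue_smul κ _ _ hθ, ← mul_add]
  exact mul_nonneg hθ (hω t ht)

lemma valueFunction_mono (hT : 0 ≤ T) (hW : ∀ ω, MonotoneOn (W ω) (Ici 0)) :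
    Monotone (valueFunction P F T κ S W) := by
  intro y z hyz
  refine iSup₂_le fun μ hμ => le_iSup₂_of_le μ (hμ.mono hyz) (eExp_mono P ?_)
  filter_upwards [hμ.2.2] with ω hω
  have hy := hω T ⟨hT, le_rfl⟩
  exact hW ω hy (hy.trans (by linarith)) (by linarith)

lemma coe_mul_valueFunction_sub_le (hT : 0 ≤ T) {θ c : ℝ} (hθ : 0 ≤ θ) (hc : 0 < c)
    {g : Ω → ℝ} (hg0 : ∀ ω, 0 ≤ g ω) (hg : Integrable g P)
    (hW : ∀ᵐ ω ∂P, ∀ v, 0 ≤ v → (c : EReal) * W ω v - g ω ≤ W ω (θ * v)) (y : ℝ) :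
    (c : EReal) * valueFunction P F T κ S W y - ((2 * ∫ ω, g ω ∂P : ℝ) : EReal) ≤
      valueFunction P F T κ S W (θ * y) := by
  refine EReal.coe_mul_iSup_sub_le hc _ fun μ => EReal.coe_mul_iSup_sub_le hc _ fun hμ => ?_
  refine (eExp_coe_mul_sub_le P _ hc hg0 hg).trans <|
    le_iSup₂_of_le (fun ω => θ • μ ω) (hμ.smul hθ) (eExp_mono P ?_)
  filter_upwards [hW, hμ.2.2] with ω hWω hμω
  rw [portfolioValue_smul κ _ _ hθ, ← mul_add]
  exact hWω _ (hμω T ⟨hT, le_rfl⟩)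

end ValueFunction

theorem stmt_1_general {Ω : Type} [m0 : MeasurableSpace Ω] (P : Measure Ω)
    (T κ : ℝ) (hT : 0 < T)
    (F : MeasureTheory.Filtration ℝ m0)
    -- the price process: strictly positive, continuous and adapted
    (S : Ω → C(Set.Icc (0:ℝ) T, ℝ))
    -- the utility function
    (U : ℝ → C(Set.Icc (0:ℝ) T, ℝ) → EReal)
    (hUmono : ∀ s, ∀ v w : ℝ, 0 < v → v ≤ w → U v s ≤ U w s)
    (hUcont : ContinuousOn (fun vs : ℝ × C(Set.Icc (0:ℝ) T, ℝ) => U vs.1 vs.2)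
      (Set.Ioi 0 ×ˢ Set.univ))
    (hU0 : ∀ s, Filter.Tendsto (fun v => U v s) (nhdsWithin 0 (Set.Ioi 0)) (nhds (U 0 s)))
    -- Assumption (ii)
    (m₁ m₂ : ℝ → ℝ)
    (hm₁c : ContinuousOn m₁ (Set.Ico 0 1)) (hm₂c : ContinuousOn m₂ (Set.Ico 0 1))
    (hm₁0 : m₁ 0 = 0) (hm₂0 : m₂ 0 = 0)
    (hm₂pos : ∀ l ∈ Set.Ico (0:ℝ) 1, 0 ≤ m₂ l)
    (ζ : Ω → ℝ) (hζpos : ∀ ω, 0 ≤ ζ ω) (hζint : Integrable ζ P)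
    (hAii : ∀ l ∈ Set.Ioo (0:ℝ) 1, ∀ v : ℝ, 0 < v →
      ∀ᵐ ω ∂P,
        ((1 - m₁ l : ℝ) : EReal) * U v (S ω) - ((m₂ l * ζ ω : ℝ) : EReal) ≤
          U ((1 - l) * v) (S ω)) :
    ∀ x : ℝ, 0 < x →
      ContinuousWithinAt
        (fun y : ℝ =>
          ⨆ (μ : Ω → SignedMeasure ℝ) (_ :
            -- the strategy is adapted
            (∀ t ∈ Set.Icc (0:ℝ) T, Measurable[F t] fun ω => (μ ω) (Set.Icc 0 t)) ∧
            -- liquidation at maturity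
            (∀ ω, (μ ω) (Set.Icc 0 T) = 0) ∧
            -- admissibility
            (∀ᵐ ω ∂P, ∀ t ∈ Set.Icc (0:ℝ) T,
              0 ≤ y + portfolioValue κ (fun u => S ω (Set.projIcc 0 T hT.le u)) (μ ω) t)),
            eExp P fun ω =>
              U (y + portfolioValue κ (fun u => S ω (Set.projIcc 0 T hT.le u)) (μ ω) T)
                (S ω))
        (Set.Ioi 0) x := by
  intro x hx
  set V := valueFunction P F T κ (fun ω u => S ω (projIcc 0 T hT.le u)) (fun ω v => U v (S ω))
  change ContinuousWithinAt V (Ioi 0) x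
  have hUcont' (s) : ∀ v ∈ Ici (0:ℝ), ContinuousWithinAt (U · s) (Ioi 0) v := by
    rintro v hv
    rcases (mem_Ici.1 hv).eq_or_lt with rfl | hv
    · exact hU0 s
    · exact hUcont.comp (f := fun w => (w, s)) (by fun_prop) (fun w hw => ⟨hw, trivial⟩) v hv
  have hc : Tendsto (fun l => 1 - m₁ l) (𝓝[>] 0) (𝓝 1) := by
    simpa [hm₁0] using tendsto_const_nhds.sub (hm₁c.tendsto_nhdsGT_of_Ico one_pos)
  have hK : Tendsto (fun l => 2 * ∫ ω, m₂ l * ζ ω ∂P) (𝓝[>] 0) (𝓝 0) := by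
    simpa [integral_const_mul, hm₂0] using
      ((hm₂c.tendsto_nhdsGT_of_Ico one_pos).mul_const (∫ ω, ζ ω ∂P)).const_mul 2
  have hmono : Monotone V := valueFunction_mono hT.le fun ω =>
    MonotoneOn.Ici_of_tendsto_nhdsGT (fun v hv w _ hvw => hUmono (S ω) v w hv hvw) (hU0 (S ω))
  have hscale : ∀ᶠ l in 𝓝[>] 0, ∀ y, 0 < y →
      ((1 - m₁ l : ℝ) : EReal) * V y - ((2 * ∫ ω, m₂ l * ζ ω ∂P : ℝ) : EReal) ≤
        V ((1 - l) * y) := by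
    filter_upwards [Ioo_mem_nhdsGT one_pos, hc.eventually (lt_mem_nhds one_pos)]
      with l hl hcl y _
    exact coe_mul_valueFunction_sub_le hT.le (sub_nonneg.2 hl.2.le) hcl
      (fun ω => mul_nonneg (hm₂pos l ⟨hl.1.le, hl.2⟩) (hζpos ω)) (hζint.const_mul _)
      (ae_forall_coe_mul_sub_le_of_continuousWithinAt (fun ω => hUcont' (S ω)) hcl.ne'
        (sub_pos.2 hl.2) (hAii l hl)) y
  exact (continuousAt_of_coe_mul_sub_le (hmono.monotoneOn _) hc hK hscale hx).continuousWithinAt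

/-- Lemma 4.1 of the paper: continuity of the value function of utility maximization with
proportional transaction costs. The market is a strictly positive continuous adapted price
process `S` on a filtered probability space satisfying the usual conditions; a trading
strategy is an adapted right-continuous process of bounded variation with `γ_{0−} = 0` and
`γ_T = 0` (encoded, pathwise, by the signed Lebesgue–Stieltjes measure `μ(ω)`, with
`γ_t = μ(ω)([0,t])`); `A(y)` is the class of strategies with `y + V^γ_t ≥ 0` on `[0,T]`.
The utility `U(v,s)` is an extended-real-valued function, finite, nondecreasing, concave and
jointly continuous on `(0,∞) × C[0,T]`, extended to `v = 0` by its right limit, satisfying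
Assumption (i) (`E[U(x,S)] > −∞` for `x > 0`) and Assumption (ii) (moduli of continuity
`m₁, m₂` and `ζ ∈ L¹(P)`). Then the value function
`u(y) = sup_{γ ∈ A(y)} E[U(y + V^γ_T, S)]` (with values in `ℝ ∪ {+∞}`) satisfies
`u(x) = lim_{y→x} u(y)` at every `x > 0`. -/
theorem stmt_1 {Ω : Type} [m0 : MeasurableSpace Ω] (P : Measure Ω) [IsProbabilityMeasure P]
    (T κ : ℝ) (hT : 0 < T) (hκ : κ ∈ Set.Ioo (0:ℝ) 1)
    (F : MeasureTheory.Filtration ℝ m0)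
    -- usual conditions: right-continuity and completeness of the filtration
    (hFright : ∀ t : ℝ, (F t : MeasurableSpace Ω) = ⨅ (s : ℝ) (_ : t < s), F s)
    (hFcomplete : ∀ A : Set Ω, MeasurableSet A → P A = 0 → MeasurableSet[F 0] A)
    -- the price process: strictly positive, continuous and adapted
    (S : Ω → C(Set.Icc (0:ℝ) T, ℝ))
    (hSpos : ∀ ω p, 0 < S ω p)
    (hSadapted : ∀ p : Set.Icc (0:ℝ) T, Measurable[F (p : ℝ)] fun ω => S ω p)
    -- the utility function
    (U : ℝ → C(Set.Icc (0:ℝ) T, ℝ) → EReal)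
    (hUfin : ∀ v : ℝ, 0 < v → ∀ s, U v s ≠ ⊤ ∧ U v s ≠ ⊥)
    (hUmono : ∀ s, ∀ v w : ℝ, 0 < v → v ≤ w → U v s ≤ U w s)
    (hUconc : ∀ s, ∀ v w : ℝ, 0 < v → 0 < w → ∀ p q : ℝ, 0 ≤ p → 0 ≤ q → p + q = 1 →
      (p : EReal) * U v s + (q : EReal) * U w s ≤ U (p * v + q * w) s)
    (hUcont : ContinuousOn (fun vs : ℝ × C(Set.Icc (0:ℝ) T, ℝ) => U vs.1 vs.2)
      (Set.Ioi 0 ×ˢ Set.univ))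
    (hU0 : ∀ s, Filter.Tendsto (fun v => U v s) (nhdsWithin 0 (Set.Ioi 0)) (nhds (U 0 s)))
    -- Assumption (i)
    (hAi : ∀ x : ℝ, 0 < x → ⊥ < eExp P fun ω => U x (S ω))
    -- Assumption (ii)
    (m₁ m₂ : ℝ → ℝ)
    (hm₁c : ContinuousOn m₁ (Set.Ico 0 1)) (hm₂c : ContinuousOn m₂ (Set.Ico 0 1))
    (hm₁0 : m₁ 0 = 0) (hm₂0 : m₂ 0 = 0)
    (hm₁pos : ∀ l ∈ Set.Ico (0:ℝ) 1, 0 ≤ m₁ l) (hm₂pos : ∀ l ∈ Set.Ico (0:ℝ) 1, 0 ≤ m₂ l)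
    (ζ : Ω → ℝ) (hζpos : ∀ ω, 0 ≤ ζ ω) (hζint : Integrable ζ P)
    (hAii : ∀ l ∈ Set.Ioo (0:ℝ) 1, ∀ v : ℝ, 0 < v →
      ∀ᵐ ω ∂P,
        ((1 - m₁ l : ℝ) : EReal) * U v (S ω) - ((m₂ l * ζ ω : ℝ) : EReal) ≤
          U ((1 - l) * v) (S ω)) :
    ∀ x : ℝ, 0 < x →
      ContinuousWithinAt
        (fun y : ℝ =>
          ⨆ (μ : Ω → SignedMeasure ℝ) (_ :
            -- the strategy is adapted
            (∀ t ∈ Set.Icc (0:ℝ) T, Measurable[F t] fun ω => (μ ω) (Set.Icc 0 t)) ∧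
            -- liquidation at maturity
            (∀ ω, (μ ω) (Set.Icc 0 T) = 0) ∧
            -- admissibility
            (∀ᵐ ω ∂P, ∀ t ∈ Set.Icc (0:ℝ) T,
              0 ≤ y + portfolioValue κ (fun u => S ω (Set.projIcc 0 T hT.le u)) (μ ω) t)),
            eExp P fun ω =>
              U (y + portfolioValue κ (fun u => S ω (Set.projIcc 0 T hT.le u)) (μ ω) T)
                (S ω))
        (Set.Ioi 0) x :=
  stmt_1_general (m0 := m0) P T κ hT F S U hUmono hUcont hU0 m₁ m₂ hm₁c hm₂c hm₁0 hm₂0 hm₂pos ζ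
    hζpos hζint hAii
end

section
/- Let κ ∈ (0,1), ε ∈ (0,κ) and x > 0. Let S : [0,T] → (0,∞) be continuous, let M : [0,T] → ℝ be right-continuous with left limits and satisfy |M_t − S_t| ≤ (κ−ε) S_t for all t ∈ [0,T], and let γ : [0,T] → ℝ be right-continuous of bounded variation with the convention γ_{0−} = 0. If the admissibility condition x + V^γ_t ≥ 0 holds for all t ∈ [0,T], then for every t ∈ [0,T]: γ_t M_t − ∫_{[0,t]} M_{u−} dγ_u ≥ ε ∫_{[0,t]} S_u |dγ_u| − x. -/
open MeasureTheory Set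

/-!
Write `N` for the left-limit process of `M`. Passing to the limit in `|M − S| ≤ (κ − ε) S`
gives `|N − S| ≤ (κ − ε) S`, so replacing `S` by `M` in the position term and by `N` in both
Jordan parts of the Stieltjes integral costs at most `(κ − ε)(|γ_t| S_t + ∫ S |dγ|)`, while the
admissibility bound `x + V^γ_t ≥ 0` pays `κ(|γ_t| S_t + ∫ S |dγ|)` in transaction costs; the
surplus is at least `ε ∫ S |dγ|`. The only delicate point is that `N` is integrable against an
arbitrary (possibly atomic) measure: it is the pointwise limit of the measurable functions
`M ∘ dyadicBelow n`.
-/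

open Filter Topology Function

/-- The largest dyadic number of level `n` strictly below `u`. -/
noncomputable def dyadicBelow (n : ℕ) (u : ℝ) : ℝ := ((⌈u * 2 ^ n⌉ : ℤ) - 1) / 2 ^ n

lemma dyadicBelow_lt (n : ℕ) (u : ℝ) : dyadicBelow n u < u := by
  rw [dyadicBelow, div_lt_iff₀ (by positivity)]
  linarith [Int.ceil_lt_add_one (u * 2 ^ n)]

lemma sub_inv_two_pow_le_dyadicBelow (n : ℕ) (u : ℝ) : u - (2 ^ n)⁻¹ ≤ dyadicBelow n u := by
  rw [dyadicBelow, le_div_iff₀ (by positivity), sub_mul, inv_mul_cancel₀ (by positivity)]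
  linarith [Int.le_ceil (u * 2 ^ n)]

lemma tendsto_dyadicBelow (u : ℝ) : Tendsto (dyadicBelow · u) atTop (𝓝[<] u) := by
  refine tendsto_nhdsWithin_of_tendsto_nhds_of_eventually_within _ ?_
    (.of_forall (dyadicBelow_lt · u))
  have hlow : Tendsto (fun n : ℕ ↦ u - (2 ^ n)⁻¹) atTop (𝓝 u) := by
    simpa using tendsto_const_nhds.sub (tendsto_inv_atTop_zero.comp
      (tendsto_pow_atTop_atTop_of_one_lt (one_lt_two : (1 : ℝ) < 2)))
  exact tendsto_of_tendsto_of_tendsto_of_le_of_le hlow tendsto_const_nhds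
    (sub_inv_two_pow_le_dyadicBelow · u) fun n ↦ (dyadicBelow_lt n u).le

/-- Whatever `f` is, `f ∘ dyadicBelow n` is measurable: it factors through `⌈u * 2 ^ n⌉ ∈ ℤ`. -/
lemma measurable_comp_dyadicBelow {β : Type*} [MeasurableSpace β] (f : ℝ → β) (n : ℕ) :
    Measurable fun u ↦ f (dyadicBelow n u) :=
  (measurable_of_countable fun k : ℤ ↦ f (((k : ℝ) - 1) / 2 ^ n)).comp
    (Int.measurable_ceil.comp (measurable_id.mul_const _))

lemma aestronglyMeasurable_leftLim {M : ℝ → ℝ} {s : Set ℝ} (hs : MeasurableSet s)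
    (hM : ∀ u ∈ s, ∃ l, Tendsto M (𝓝[<] u) (𝓝 l)) (ν : Measure ℝ) :
    AEStronglyMeasurable (leftLim M) (ν.restrict s) := by
  have hmeas : Measurable (s.indicator (leftLim M)) := by
    refine measurable_of_tendsto_metrizable
      (fun n ↦ (measurable_comp_dyadicBelow M n).indicator hs) (tendsto_pi_nhds.2 fun u ↦ ?_)
    by_cases hu : u ∈ s
    · obtain ⟨l, hl⟩ := hM u hu
      simp only [indicator_of_mem hu, leftLim_eq_of_tendsto hl]
      exact hl.comp (tendsto_dyadicBelow u)
    · simpa only [indicator_of_notMem hu] using tendsto_const_nhds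
  exact hmeas.aestronglyMeasurable.congr (indicator_ae_eq_restrict hs)

lemma abs_leftLim_sub_le {M S : ℝ → ℝ} {u c l : ℝ} (hM : Tendsto M (𝓝[<] u) (𝓝 l))
    (hS : Tendsto S (𝓝[<] u) (𝓝 (S u))) (hMS : ∀ᶠ v in 𝓝[<] u, |M v - S v| ≤ c * S v) :
    |leftLim M u - S u| ≤ c * S u := by
  rw [leftLim_eq_of_tendsto hM]
  exact le_of_tendsto_of_tendsto (hM.sub hS).abs (hS.const_mul c) hMS

lemma abs_setIntegral_sub_le {α : Type*} [MeasurableSpace α] {ν : Measure α} {s : Set α}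
    (hs : MeasurableSet s) {f g : α → ℝ} {c : ℝ} (hg : IntegrableOn g s ν)
    (hf : AEStronglyMeasurable f (ν.restrict s)) (hfg : ∀ u ∈ s, |f u - g u| ≤ c * g u) :
    |∫ u in s, f u ∂ν - ∫ u in s, g u ∂ν| ≤ c * ∫ u in s, g u ∂ν := by
  have hfg_ae : ∀ᵐ u ∂ν.restrict s, |f u - g u| ≤ c * g u :=
    (ae_restrict_iff' hs).2 (.of_forall hfg)
  have hf_int : IntegrableOn f s ν := by
    refine (hg.abs.add (hg.const_mul c)).mono' hf (hfg_ae.mono fun u hu ↦ ?_)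
    change |f u| ≤ |g u| + c * g u
    linarith [abs_sub_abs_le_abs_sub (f u) (g u)]
  rw [← integral_sub hf_int hg, ← integral_const_mul]
  exact norm_integral_le_of_norm_le (hg.const_mul c) (f := fun u ↦ f u - g u) hfg_ae

lemma abs_stieltjesIntegral_sub_le {S N : ℝ → ℝ} {μ : SignedMeasure ℝ} {t c : ℝ}
    (hS : IntegrableOn S (Icc 0 t) μ.totalVariation)
    (hN : AEStronglyMeasurable N (μ.totalVariation.restrict (Icc 0 t)))
    (hNS : ∀ u ∈ Icc 0 t, |N u - S u| ≤ c * S u) :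
    |stieltjesIntegral N μ t - stieltjesIntegral S μ t| ≤ c * totalVarIntegral S μ t := by
  set ν₁ := μ.toJordanDecomposition.posPart
  set ν₂ := μ.toJordanDecomposition.negPart
  have hν : μ.totalVariation = ν₁ + ν₂ := rfl
  rw [hν] at hS hN
  have hS₁ : IntegrableOn S (Icc 0 t) ν₁ := hS.mono_measure (Measure.le_add_right le_rfl)
  have hS₂ : IntegrableOn S (Icc 0 t) ν₂ := hS.mono_measure (Measure.le_add_left le_rfl)
  have h₁ := abs_setIntegral_sub_le measurableSet_Icc hS₁
    (hN.mono_measure (Measure.restrict_mono subset_rfl (Measure.le_add_right le_rfl))) hNS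
  have h₂ := abs_setIntegral_sub_le measurableSet_Icc hS₂
    (hN.mono_measure (Measure.restrict_mono subset_rfl (Measure.le_add_left le_rfl))) hNS
  rw [stieltjesIntegral, stieltjesIntegral, totalVarIntegral, hν, Measure.restrict_add,
    integral_add_measure hS₁ hS₂, abs_le]
  rw [abs_le] at h₁ h₂
  constructor <;> linarith [h₁.1, h₁.2, h₂.1, h₂.2]

theorem stmt_2_general (T κ ε x : ℝ)
    (hε : ε ∈ Set.Ioo 0 κ)
    (S M : ℝ → ℝ) (hS : ContinuousOn S (Icc 0 T)) (hSpos : ∀ t ∈ Icc (0:ℝ) T, 0 < S t)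
    (hMll : ∀ t ∈ Ioc (0:ℝ) T, ∃ l, Filter.Tendsto M (nhdsWithin t (Iio t)) (nhds l))
    (hM0 : Function.leftLim M 0 = M 0)
    (hMS : ∀ t ∈ Icc (0:ℝ) T, |M t - S t| ≤ (κ - ε) * S t)
    (μ : SignedMeasure ℝ)
    (hadm : ∀ t ∈ Icc (0:ℝ) T, 0 ≤ x + portfolioValue κ S μ t) :
    ∀ t ∈ Icc (0:ℝ) T,
      ε * totalVarIntegral S μ t - x ≤
        μ (Icc 0 t) * M t - stieltjesIntegral (Function.leftLim M) μ t := by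
  intro t ht
  have hsub : Icc 0 t ⊆ Icc 0 T := Icc_subset_Icc le_rfl ht.2
  have hNS : ∀ u ∈ Icc 0 t, |leftLim M u - S u| ≤ (κ - ε) * S u := by
    rintro u ⟨hu0, hut⟩
    obtain rfl | hpos := hu0.eq_or_lt
    · rw [hM0]
      exact hMS 0 (hsub ⟨le_rfl, hut⟩)
    have hnhds : Icc 0 T ∈ 𝓝[<] u := Icc_mem_nhdsLT_of_mem ⟨hpos, hut.trans ht.2⟩
    obtain ⟨l, hl⟩ := hMll u ⟨hpos, hut.trans ht.2⟩
    exact abs_leftLim_sub_le hl ((hS u (hsub ⟨hu0, hut⟩)).mono_of_mem_nhdsWithin hnhds)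
      (eventually_of_mem hnhds hMS)
  have hN : AEStronglyMeasurable (leftLim M) (μ.totalVariation.restrict (Icc 0 t)) := by
    rw [← Ioc_insert_left ht.1, insert_eq, aestronglyMeasurable_union_iff,
      Measure.restrict_singleton]
    exact ⟨aestronglyMeasurable_dirac.smul_measure _, aestronglyMeasurable_leftLim
      measurableSet_Ioc (fun u hu ↦ hMll u ⟨hu.1, hu.2.trans ht.2⟩) _⟩
  have hintegral := abs_le.1 <| abs_stieltjesIntegral_sub_le
    ((hS.mono hsub).integrableOn_compact isCompact_Icc) hN hNS
  have hposition :
      |μ (Icc 0 t) * M t - μ (Icc 0 t) * S t| ≤ (κ - ε) * (|μ (Icc 0 t)| * S t) := by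
    rw [← mul_sub, abs_mul, mul_left_comm]
    exact mul_le_mul_of_nonneg_left (hMS t ht) (abs_nonneg _)
  have hcost : 0 ≤ ε * (|μ (Icc 0 t)| * S t) :=
    mul_nonneg hε.1.le (mul_nonneg (abs_nonneg _) (hSpos t ht).le)
  have hV := hadm t ht
  rw [portfolioValue] at hV
  linarith [(abs_le.1 hposition).1]

/-- Key estimate in Step 1 of Lemma 4.3 of the paper: if `M` is a strictly consistent price
system, i.e. `|M − S| ≤ (κ − ε) S` on `[0,T]`, and the strategy `γ` (encoded by the signed
measure `μ`, `γ_t = μ([0,t])`) is admissible with initial capital `x`, then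
`γ_t M_t − ∫_{[0,t]} M_{u−} dγ_u ≥ ε ∫_{[0,t]} S_u |dγ_u| − x` for every `t ∈ [0,T]`. -/
theorem stmt_2 (T κ ε x : ℝ) (hT : 0 < T) (hκ : κ ∈ Set.Ioo (0 : ℝ) 1)
    (hε : ε ∈ Set.Ioo 0 κ) (hx : 0 < x)
    (S M : ℝ → ℝ) (hS : ContinuousOn S (Icc 0 T)) (hSpos : ∀ t ∈ Icc (0:ℝ) T, 0 < S t)
    (hMrc : ∀ t ∈ Ico (0:ℝ) T, ContinuousWithinAt M (Ici t) t)
    (hMll : ∀ t ∈ Ioc (0:ℝ) T, ∃ l, Filter.Tendsto M (nhdsWithin t (Iio t)) (nhds l))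
    (hM0 : Function.leftLim M 0 = M 0)
    (hMS : ∀ t ∈ Icc (0:ℝ) T, |M t - S t| ≤ (κ - ε) * S t)
    (μ : SignedMeasure ℝ)
    (hadm : ∀ t ∈ Icc (0:ℝ) T, 0 ≤ x + portfolioValue κ S μ t) :
    ∀ t ∈ Icc (0:ℝ) T,
      ε * totalVarIntegral S μ t - x ≤
        μ (Icc 0 t) * M t - stieltjesIntegral (Function.leftLim M) μ t :=
  stmt_2_general T κ ε x hε S M hS hSpos hMll hM0 hMS μ hadm
end

section
/- Let T > 0. Let S_n, S : [0,T] → ℝ with S continuous and S_n → S uniformly on [0,T]. Let γ_n, γ : [0,T] → ℝ be right-continuous of bounded variation with the convention γ_n(0−) = γ(0−) = 0, such that sup_n Var_{[0,T]}(γ_n) < ∞ and there is a Borel set I ⊆ [0,T] of full Lebesgue measure with γ_n(u) → γ(u) for every u ∈ I. Then for every t ∈ [0,T] with γ_n(t) → γ(t), one has ∫_{[0,t]} S_n(u) dγ_n(u) → ∫_{[0,t]} S(u) dγ(u) as n → ∞. -/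
open MeasureTheory Set

open Filter Topology

/-!
Over a partition of `[0,t]` of mesh `< δ` whose nodes `p_i` lie in `I ∪ {t}`, the integral
`∫_{[0,t]} f dμ` differs from the Riemann–Stieltjes sum `∑ f(p_i) μ((p_{i-1}, p_i])` by at most
`η · |μ|([0,t])` when `f` oscillates by at most `η` on each cell. Such partitions exist because
`I` has null complement, hence is dense. The bound is uniform in `n` thanks to the variation
bound, and the sums for `μ_n` converge to the one for `μ₀` since `μ_n([0,p_i]) → μ₀([0,p_i])`.
Uniform convergence `S_n → S₀` costs one more `η · sup_n |μ_n|([0,t])`. The partition starts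
below `0`, so that the first cell is `[0, p_1]` and carries the atom of `μ` at `0`.
-/

section FiniteMeasure

variable {α : Type*} [MeasurableSpace α] {ν : Measure α} [IsFiniteMeasure ν] {f g : α → ℝ}
  {s : Set α} {ε : ℝ}

theorem abs_setIntegral_sub_setIntegral_le (hf : IntegrableOn f s ν) (hg : IntegrableOn g s ν)
    (hfg : ∀ x ∈ s, |f x - g x| ≤ ε) :
    |∫ x in s, f x ∂ν - ∫ x in s, g x ∂ν| ≤ ε * ν.real s := by
  rw [← integral_sub hf hg]
  simpa only [Real.norm_eq_abs] using
    norm_setIntegral_le_of_norm_le_const (f := fun x => f x - g x) (measure_lt_top ν s) hfg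

theorem abs_setIntegral_biUnion_sub_sum_le {ι : Type*} (t : Finset ι) {A : ι → Set α}
    (hA : ∀ i ∈ t, MeasurableSet (A i)) (hd : (t : Set ι).PairwiseDisjoint A)
    (hf : IntegrableOn f (⋃ i ∈ t, A i) ν) {c : ι → ℝ} (hc : ∀ i ∈ t, ∀ x ∈ A i, |f x - c i| ≤ ε) :
    |∫ x in ⋃ i ∈ t, A i, f x ∂ν - ∑ i ∈ t, c i * ν.real (A i)|
      ≤ ε * ν.real (⋃ i ∈ t, A i) := by
  have hfA : ∀ i ∈ t, IntegrableOn f (A i) ν := fun i hi =>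
    hf.mono_set (subset_biUnion_of_mem (u := A) hi)
  rw [integral_biUnion_finset t hA hd hfA,
    measureReal_biUnion_finset hd hA, Finset.mul_sum, ← Finset.sum_sub_distrib]
  refine (Finset.abs_sum_le_sum_abs _ _).trans (Finset.sum_le_sum fun i hi => ?_)
  have := abs_setIntegral_sub_setIntegral_le (hfA i hi) (integrableOn_const (C := c i))
    (hc i hi)
  rwa [setIntegral_const, smul_eq_mul, mul_comm] at this

end FiniteMeasure

namespace MeasureTheory.SignedMeasure

variable {α : Type*} [MeasurableSpace α] (μ : SignedMeasure α)

theorem apply_eq_real_posPart_sub_real_negPart {s : Set α} (hs : MeasurableSet s) :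
    μ s = μ.toJordanDecomposition.posPart.real s - μ.toJordanDecomposition.negPart.real s := by
  conv_lhs => rw [← μ.toSignedMeasure_toJordanDecomposition]
  rw [JordanDecomposition.toSignedMeasure, sub_apply,
    Measure.toSignedMeasure_apply_measurable hs, Measure.toSignedMeasure_apply_measurable hs]

theorem totalVariation_real_apply (s : Set α) :
    μ.totalVariation.real s
      = μ.toJordanDecomposition.posPart.real s + μ.toJordanDecomposition.negPart.real s :=
  measureReal_add_apply

end MeasureTheory.SignedMeasure

section StieltjesIntegral

variable (μ : SignedMeasure ℝ) {f g : ℝ → ℝ} {t ε : ℝ}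

theorem abs_stieltjesIntegral_sub_le_s8 (hf : ContinuousOn f (Icc 0 t))
    (hg : ContinuousOn g (Icc 0 t)) (hfg : ∀ x ∈ Icc 0 t, |f x - g x| ≤ ε) :
    |stieltjesIntegral f μ t - stieltjesIntegral g μ t|
      ≤ ε * μ.totalVariation.real (Icc 0 t) := by
  have hpos := abs_setIntegral_sub_setIntegral_le (ν := μ.toJordanDecomposition.posPart)
    hf.integrableOn_Icc hg.integrableOn_Icc hfg
  have hneg := abs_setIntegral_sub_setIntegral_le (ν := μ.toJordanDecomposition.negPart)
    hf.integrableOn_Icc hg.integrableOn_Icc hfg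
  rw [stieltjesIntegral, stieltjesIntegral, μ.totalVariation_real_apply]
  rw [abs_le] at *
  constructor <;> linarith

theorem abs_stieltjesIntegral_sub_sum_le (hf : ContinuousOn f (Icc 0 t)) {ι : Type*}
    (s : Finset ι) {A : ι → Set ℝ} (hA : ∀ i ∈ s, MeasurableSet (A i))
    (hd : (s : Set ι).PairwiseDisjoint A) (hU : ⋃ i ∈ s, A i = Icc 0 t) {c : ι → ℝ}
    (hc : ∀ i ∈ s, ∀ x ∈ A i, |f x - c i| ≤ ε) :
    |stieltjesIntegral f μ t - ∑ i ∈ s, c i * μ (A i)|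
      ≤ ε * μ.totalVariation.real (Icc 0 t) := by
  have hpos := abs_setIntegral_biUnion_sub_sum_le (ν := μ.toJordanDecomposition.posPart) s hA hd
    (hU ▸ hf.integrableOn_Icc) hc
  have hneg := abs_setIntegral_biUnion_sub_sum_le (ν := μ.toJordanDecomposition.negPart) s hA hd
    (hU ▸ hf.integrableOn_Icc) hc
  have hsum : ∑ i ∈ s, c i * μ (A i) = ∑ i ∈ s, c i * μ.toJordanDecomposition.posPart.real (A i)
      - ∑ i ∈ s, c i * μ.toJordanDecomposition.negPart.real (A i) := by
    rw [← Finset.sum_sub_distrib]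
    refine Finset.sum_congr rfl fun i hi => ?_
    rw [μ.apply_eq_real_posPart_sub_real_negPart (hA i hi), mul_sub]
  rw [hU] at hpos hneg
  rw [stieltjesIntegral, μ.totalVariation_real_apply, hsum]
  rw [abs_le] at *
  constructor <;> linarith

end StieltjesIntegral

theorem MeasureTheory.SignedMeasure.tendsto_apply_disjointed {α β : Type*} [MeasurableSpace α]
    {l : Filter β} {μ : β → SignedMeasure α} {μ₀ : SignedMeasure α} {E : ℕ → Set α}
    (hE : Monotone E) (hEm : ∀ i, MeasurableSet (E i))
    (h : ∀ i, Tendsto (fun n => μ n (E i)) l (𝓝 (μ₀ (E i)))) (i : ℕ) :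
    Tendsto (fun n => μ n (disjointed E i)) l (𝓝 (μ₀ (disjointed E i))) := by
  cases i with
  | zero => simpa only [disjointed_zero] using h 0
  | succ i =>
    have hsucc : disjointed E (i + 1) = E (i + 1) \ E i := hE.disjointed_succ (not_isMax i)
    simp only [hsucc, VectorMeasure.of_sdiff (hEm i) (hEm _) (hE (Nat.le_succ i))]
    exact (h _).sub (h i)

theorem tendsto_of_forall_approx {β : Type*} {l : Filter β} {a : β → ℝ} {a₀ : ℝ}
    (h : ∀ ε > 0, ∃ (b : β → ℝ) (b₀ : ℝ), Tendsto b l (𝓝 b₀) ∧ (∀ᶠ n in l, |a n - b n| ≤ ε) ∧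
      |a₀ - b₀| ≤ ε) :
    Tendsto a l (𝓝 a₀) := by
  rw [Metric.tendsto_nhds]
  intro ε hε
  obtain ⟨b, b₀, hb, hab, hab₀⟩ := h (ε / 4) (by positivity)
  filter_upwards [Metric.tendsto_nhds.1 hb (ε / 4) (by positivity), hab] with n hbn habn
  rw [Real.dist_eq] at hbn ⊢
  rw [abs_le] at habn hab₀
  rw [abs_lt] at hbn ⊢
  constructor <;> linarith

theorem exists_partition_mem_of_dense {G : Set ℝ} {t δ : ℝ} (ht : 0 ≤ t) (hδ : 0 < δ)
    (htG : t ∈ G) (hG : ∀ a b, a < b → b ≤ t → (G ∩ Ioo a b).Nonempty) :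
    ∃ (k : ℕ) (p : ℕ → ℝ), Monotone p ∧ p 0 < 0 ∧ p k = t ∧ (∀ i, p i ≤ t) ∧
      (∀ i, p i ∈ G) ∧ ∀ i, p (i + 1) - p i < δ := by
  set h := δ / 2
  have h0 : 0 < h := by positivity
  have hδh : δ = 2 * h := by ring
  -- `q i` lies in the cell `((i - 1) h, i h)` as long as `i h ≤ t`; the last node is `t`
  choose q hqG hq using fun i : ℕ =>
    hG (min (i * h) t - h) (min (i * h) t) (by linarith) (min_le_right _ _)
  set k := ⌊t / h⌋₊ + 1
  have htk : t < k * h := by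
    rw [← div_lt_iff₀ h0]; exact_mod_cast Nat.lt_floor_add_one (t / h)
  have hq_cell : ∀ i < k, i * h - h < q i ∧ q i < i * h := by
    intro i hi
    have hih : (i : ℝ) * h ≤ t := by
      rw [← le_div_iff₀ h0]
      exact (Nat.cast_le.2 (Nat.lt_succ_iff.1 hi)).trans (Nat.floor_le (by positivity))
    simpa only [min_eq_left hih, mem_Ioo] using hq i
  set p : ℕ → ℝ := fun i => if i < k then q i else t
  have hp_cell : ∀ i < k, p i = q i := fun i hi => if_pos hi
  have hp_t : ∀ i, k ≤ i → p i = t := fun i hi => if_neg (not_lt.2 hi)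
  have hp_le : ∀ i, p i ≤ t := by
    intro i
    by_cases hi : i < k
    · simpa only [hp_cell i hi] using ((hq i).2.trans_le (min_le_right _ _)).le
    · rw [hp_t i (not_lt.1 hi)]
  have hstep : ∀ i, p i ≤ p (i + 1) ∧ p (i + 1) - p i < δ := by
    intro i
    rcases lt_trichotomy (i + 1) k with hi | hi | hi
    · have h1 := hq_cell i (by omega)
      have h2 := hq_cell (i + 1) hi
      rw [hp_cell i (by omega), hp_cell (i + 1) hi]
      push_cast at h2
      constructor <;> linarith
    · have h1 := hq_cell i (by omega)
      have hk : (k : ℝ) = i + 1 := by exact_mod_cast hi.symm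
      rw [hk] at htk
      refine ⟨hp_t (i + 1) hi.ge ▸ hp_le i, ?_⟩
      rw [hp_t (i + 1) hi.ge, hp_cell i (by omega)]
      linarith
    · rw [hp_t i (by omega), hp_t (i + 1) hi.le]
      constructor <;> linarith
  refine ⟨k, p, monotone_nat_of_le_succ fun i => (hstep i).1, ?_, hp_t k le_rfl, hp_le,
    fun i => ?_, fun i => (hstep i).2⟩
  · rw [hp_cell 0 (Nat.succ_pos _)]; simpa using (hq_cell 0 (Nat.succ_pos _)).2
  · by_cases hi : i < k
    · rw [hp_cell i hi]; exact hqG i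
    · rw [hp_t i (not_lt.1 hi)]; exact htG

theorem mem_Icc_of_mem_disjointed_Icc {p : ℕ → ℝ} (hp : Monotone p) (hp0 : p 0 < 0) {δ : ℝ}
    (hmesh : ∀ i, p (i + 1) - p i < δ) {i : ℕ} {x : ℝ}
    (hx : x ∈ disjointed (fun i => Icc 0 (p i)) i) : x ∈ Icc 0 (p i) ∧ p i - x < δ := by
  cases i with
  | zero =>
    rw [disjointed_zero] at hx
    exact absurd ((mem_Icc.1 hx).1.trans (mem_Icc.1 hx).2) (not_le.2 hp0)
  | succ i =>
    have hE : Monotone fun i => Icc 0 (p i) := fun i j hij => Icc_subset_Icc_right (hp hij)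
    have hsucc : disjointed (fun i => Icc 0 (p i)) (i + 1) = Icc 0 (p (i + 1)) \ Icc 0 (p i) :=
      hE.disjointed_succ (not_isMax i)
    rw [hsucc] at hx
    have hxi : p i < x := not_le.1 fun h => hx.2 (mem_Icc.2 ⟨hx.1.1, h⟩)
    exact ⟨hx.1, by linarith [hmesh i]⟩

theorem inter_nonempty_of_measure_sdiff_eq_zero {X : Type*} [TopologicalSpace X]
    [MeasurableSpace X] {μ : Measure X} [μ.IsOpenPosMeasure] {s I U : Set X}
    (h : μ (s \ I) = 0) (hU : IsOpen U) (hUne : U.Nonempty) (hUs : U ⊆ s) :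
    (I ∩ U).Nonempty := by
  by_contra hemp
  exact hU.measure_ne_zero μ hUne
    (measure_mono_null (fun x hx => (⟨hUs hx, fun hxI => hemp ⟨x, hxI, hx⟩⟩ : x ∈ s \ I)) h)

section Convergence

variable {β : Type*} {l : Filter β} {μ : β → SignedMeasure ℝ} {t C : ℝ}

theorem tendsto_stieltjesIntegral_of_tendsto_Icc {f : ℝ → ℝ} {μ₀ : SignedMeasure ℝ}
    (ht : 0 ≤ t) (hf : ContinuousOn f (Icc 0 t))
    (hC : ∀ n, (μ n).totalVariation.real (Icc 0 t) ≤ C)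
    (hdense : ∀ a b, 0 ≤ a → a < b → b ≤ t →
      ∃ u ∈ Ioo a b, Tendsto (fun n => μ n (Icc 0 u)) l (𝓝 (μ₀ (Icc 0 u))))
    (hμt : Tendsto (fun n => μ n (Icc 0 t)) l (𝓝 (μ₀ (Icc 0 t)))) :
    Tendsto (fun n => stieltjesIntegral f (μ n) t) l (𝓝 (stieltjesIntegral f μ₀ t)) := by
  set G := {u | Tendsto (fun n => μ n (Icc 0 u)) l (𝓝 (μ₀ (Icc 0 u)))}
  have hG : ∀ a b, a < b → b ≤ t → (G ∩ Ioo a b).Nonempty := by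
    intro a b hab hbt
    rcases lt_or_ge a 0 with ha | ha
    · obtain ⟨u, hau, hub⟩ := exists_between (lt_min hab ha)
      refine ⟨u, ?_, hau, hub.trans_le (min_le_left _ _)⟩
      show Tendsto (fun n => μ n (Icc 0 u)) l (𝓝 (μ₀ (Icc 0 u)))
      simp only [Icc_eq_empty_of_lt (hub.trans_le (min_le_right _ _)), VectorMeasure.empty,
        tendsto_const_nhds]
    · obtain ⟨u, hu, hconv⟩ := hdense a b ha hab hbt
      exact ⟨u, hconv, hu⟩
  refine tendsto_of_forall_approx fun ε hε => ?_
  set V := μ₀.totalVariation.real (Icc 0 t)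
  set η := ε / (|C| + V + 1)
  have hη : 0 < η := div_pos hε (by positivity)
  have hηε : η * (|C| + V + 1) = ε := div_mul_cancel₀ _ (by positivity)
  obtain ⟨δ, hδ, hfδ⟩ := Metric.uniformContinuousOn_iff.1
    (isCompact_Icc.uniformContinuousOn_of_continuous hf) η hη
  obtain ⟨k, p, hp, hp0, hpk, hpt, hpG, hmesh⟩ := exists_partition_mem_of_dense ht hδ hμt hG
  set E : ℕ → Set ℝ := fun i => Icc 0 (p i)
  have hE : Monotone E := fun i j hij => Icc_subset_Icc_right (hp hij)
  have hU : ⋃ i ∈ Finset.range (k + 1), disjointed E i = Icc 0 t := by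
    rw [biUnion_range_succ_disjointed, hE.partialSups_eq, ← hpk]
  have hosc : ∀ i ∈ Finset.range (k + 1), ∀ x ∈ disjointed E i, |f x - f (p i)| ≤ η := by
    intro i _ x hx
    obtain ⟨⟨hx0, hxp⟩, hδx⟩ := mem_Icc_of_mem_disjointed_Icc hp hp0 hmesh hx
    refine (hfδ x ⟨hx0, hxp.trans (hpt i)⟩ (p i) ⟨hx0.trans hxp, hpt i⟩ ?_).le
    rw [Real.dist_eq, abs_sub_comm, abs_of_nonneg (by linarith)]
    exact hδx
  have hest := fun ν => abs_stieltjesIntegral_sub_sum_le ν hf (Finset.range (k + 1))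
    (fun i _ => MeasurableSet.disjointed (fun _ => measurableSet_Icc) i)
    ((disjoint_disjointed E).set_pairwise _) hU hosc
  refine ⟨fun n => ∑ i ∈ Finset.range (k + 1), f (p i) * μ n (disjointed E i),
    ∑ i ∈ Finset.range (k + 1), f (p i) * μ₀ (disjointed E i),
    tendsto_finsetSum _ fun i _ => ((SignedMeasure.tendsto_apply_disjointed hE
      (fun _ => measurableSet_Icc) hpG i).const_mul _), ?_, ?_⟩
  · refine Eventually.of_forall fun n => (hest (μ n)).trans ?_
    have hV : 0 ≤ V := measureReal_nonneg
    nlinarith [hC n, le_abs_self C]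
  · refine (hest μ₀).trans ?_
    nlinarith [abs_nonneg C]

theorem tendsto_stieltjesIntegral_of_tendstoUniformlyOn {S : β → ℝ → ℝ} {S₀ : ℝ → ℝ} {L : ℝ}
    (hS : ∀ n, ContinuousOn (S n) (Icc 0 t)) (hS₀ : ContinuousOn S₀ (Icc 0 t))
    (hunif : TendstoUniformlyOn S S₀ l (Icc 0 t))
    (hC : ∀ n, (μ n).totalVariation.real (Icc 0 t) ≤ C)
    (hlim : Tendsto (fun n => stieltjesIntegral S₀ (μ n) t) l (𝓝 L)) :
    Tendsto (fun n => stieltjesIntegral (S n) (μ n) t) l (𝓝 L) := by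
  refine tendsto_of_forall_approx fun ε hε => ⟨_, L, hlim, ?_, by simpa using hε.le⟩
  set η := ε / (|C| + 1)
  have hηε : η * (|C| + 1) = ε := div_mul_cancel₀ _ (by positivity)
  filter_upwards [Metric.tendstoUniformlyOn_iff.1 hunif η (by positivity)] with n hn
  refine (abs_stieltjesIntegral_sub_le_s8 (μ n) (ε := η) (hS n) hS₀ fun x hx => ?_).trans ?_
  · rw [abs_sub_comm, ← Real.dist_eq]; exact (hn x hx).le
  · nlinarith [hC n, le_abs_self C, (by positivity : 0 ≤ η)]

end Convergence

theorem stmt_8_general (T : ℝ) (S : ℕ → ℝ → ℝ) (S₀ : ℝ → ℝ)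
    (hS₀ : ContinuousOn S₀ (Icc 0 T)) (hSn : ∀ n, ContinuousOn (S n) (Icc 0 T))
    (hunif : TendstoUniformlyOn S S₀ Filter.atTop (Icc 0 T))
    (μ : ℕ → SignedMeasure ℝ) (μ₀ : SignedMeasure ℝ)
    (c : ℝ) (hvar : ∀ n, (μ n).totalVariation (Icc 0 T) ≤ ENNReal.ofReal c)
    (I : Set ℝ)
    (hIfull : volume (Icc (0:ℝ) T \ I) = 0)
    (hconv : ∀ u ∈ I, Filter.Tendsto (fun n => (μ n) (Icc 0 u)) Filter.atTop
      (nhds (μ₀ (Icc 0 u)))) :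
    ∀ t ∈ Icc (0:ℝ) T,
      Filter.Tendsto (fun n => (μ n) (Icc 0 t)) Filter.atTop (nhds (μ₀ (Icc 0 t))) →
      Filter.Tendsto (fun n => stieltjesIntegral (S n) (μ n) t) Filter.atTop
        (nhds (stieltjesIntegral S₀ μ₀ t)) := by
  intro t ht hμt
  have htT : Icc 0 t ⊆ Icc 0 T := Icc_subset_Icc_right ht.2
  have hC : ∀ n, (μ n).totalVariation.real (Icc 0 t) ≤ (ENNReal.ofReal c).toReal := fun n =>
    ENNReal.toReal_mono ENNReal.ofReal_ne_top ((measure_mono htT).trans (hvar n))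
  refine tendsto_stieltjesIntegral_of_tendstoUniformlyOn (fun n => (hSn n).mono htT)
    (hS₀.mono htT) (hunif.mono htT) hC
    (tendsto_stieltjesIntegral_of_tendsto_Icc ht.1 (hS₀.mono htT) hC ?_ hμt)
  intro a b ha hab hbt
  obtain ⟨u, huI, hu⟩ := inter_nonempty_of_measure_sdiff_eq_zero hIfull isOpen_Ioo
    (nonempty_Ioo.2 hab) (Ioo_subset_Icc_self.trans (Icc_subset_Icc ha (hbt.trans ht.2)))
  exact ⟨u, hu, hconv u huI⟩

/-- Convergence of Stieltjes integrals (equation (4.11) of the paper): if `S_n → S` uniformly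
on `[0,T]` with `S` continuous, the strategies `γ_n` (encoded by signed measures `μ_n`,
`γ_n(u) = μ_n([0,u])`) have uniformly bounded total variation and converge pointwise to `γ`
on a set of full Lebesgue measure, then `∫_{[0,t]} S_n dγ_n → ∫_{[0,t]} S dγ` at every time
`t ∈ [0,T]` at which `γ_n(t) → γ(t)`. -/
theorem stmt_8 (T : ℝ) (hT : 0 < T) (S : ℕ → ℝ → ℝ) (S₀ : ℝ → ℝ)
    (hS₀ : ContinuousOn S₀ (Icc 0 T)) (hSn : ∀ n, ContinuousOn (S n) (Icc 0 T))
    (hunif : TendstoUniformlyOn S S₀ Filter.atTop (Icc 0 T))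
    (μ : ℕ → SignedMeasure ℝ) (μ₀ : SignedMeasure ℝ)
    (c : ℝ) (hvar : ∀ n, (μ n).totalVariation (Icc 0 T) ≤ ENNReal.ofReal c)
    (I : Set ℝ) (hImeas : MeasurableSet I) (hIsub : I ⊆ Icc 0 T)
    (hIfull : volume (Icc (0:ℝ) T \ I) = 0)
    (hconv : ∀ u ∈ I, Filter.Tendsto (fun n => (μ n) (Icc 0 u)) Filter.atTop
      (nhds (μ₀ (Icc 0 u)))) :
    ∀ t ∈ Icc (0:ℝ) T,
      Filter.Tendsto (fun n => (μ n) (Icc 0 t)) Filter.atTop (nhds (μ₀ (Icc 0 t))) →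
      Filter.Tendsto (fun n => stieltjesIntegral (S n) (μ n) t) Filter.atTop
        (nhds (stieltjesIntegral S₀ μ₀ t)) :=
  stmt_8_general T S S₀ hS₀ hSn hunif μ μ₀ c hvar I hIfull hconv
end

section
/- Let T > 0, κ ∈ (0,1), let S : [0,T] → (0,∞) be continuous, and let γ : [0,T] → ℝ be right-continuous of bounded variation with γ_{0−} = 0 and γ_T = 0. For n ∈ ℕ define the discretized strategy γ̄^n by γ̄^n_t := Σ_{i=1}^{n−1} γ_{(i−1)T/n} · 1_{[iT/n, (i+1)T/n)}(t) for t ∈ [0,T) and γ̄^n_T := 0. Then V^γ_T ≤ liminf_{n→∞} V^{γ̄^n}_T, i.e. −∫_{[0,T]} S dγ − κ∫_{[0,T]} S |dγ| ≤ liminf_{n→∞} ( −∫_{[0,T]} S dγ̄^n − κ∫_{[0,T]} S |dγ̄^n| ). -/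
open MeasureTheory Set

/-- The value of the discretized strategy `γ̄^n` on the grid cell `[iT/n, (i+1)T/n)`:
`γ̄^n = Σ_{i=1}^{n−1} γ_{(i−1)T/n} 1_{[iT/n,(i+1)T/n)}`, together with `γ̄^n_T = 0` and
`γ̄^n = 0` on `[0, T/n)`. -/
noncomputable def bval (T : ℝ) (γ : ℝ → ℝ) (n i : ℕ) : ℝ :=
  if i = 0 ∨ n ≤ i then 0 else γ (((i : ℝ) - 1) * T / n)

/-- The terminal portfolio value `V^{γ̄^n}_T = −∫_{[0,T]} S dγ̄^n − κ ∫_{[0,T]} S |dγ̄^n|` of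
the piecewise-constant strategy `γ̄^n`, whose Lebesgue–Stieltjes measure is the sum of the
point masses `(bval(i+1) − bval(i)) δ_{(i+1)T/n}`, `i = 0, …, n−1`. -/
noncomputable def discreteTerminalValue (T κ : ℝ) (S γ : ℝ → ℝ) (n : ℕ) : ℝ :=
  -(∑ i ∈ Finset.range n, S (((i : ℝ) + 1) * T / n) * (bval T γ n (i + 1) - bval T γ n i))
    - κ * ∑ i ∈ Finset.range n,
        S (((i : ℝ) + 1) * T / n) * |bval T γ n (i + 1) - bval T γ n i|

/-!
On the `i`-th grid cell `C_i = [0, t_{i+1}] \ [0, t_i]`, where `t_i` is the time at which `γ̄^n`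
samples `γ` on its `i`-th cell, the jump of `γ̄^n` at the trading time `(i+1)T/n` is `μ(C_i)`,
and `C_i` lies within `2T/n` of that time. By uniform continuity of `S`, for large `n` the
discrete sum `Σ S((i+1)T/n) μ(C_i)` is within `ε |μ|([0,T])` of `∫ S dμ`, and, since
`|μ(C_i)| ≤ |μ|(C_i)`, the sum `Σ S((i+1)T/n) |μ(C_i)|` is at most `∫ S d|μ| + ε |μ|([0,T])`.
Hence `V^{γ̄^n}_T ≥ V^γ_T - (1 + κ) ε |μ|([0,T])` eventually, for every `ε > 0`.
-/

open Filter

theorem le_liminf_of_forall_eventually_sub_mul_le {β : Type*} {f : Filter β} [f.NeBot]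
    {u : β → ℝ} {a C : ℝ} (hu : IsBoundedUnder (· ≤ ·) f u) (hC : 0 ≤ C)
    (h : ∀ ε > 0, ∀ᶠ x in f, a - C * ε ≤ u x) : a ≤ liminf u f := by
  refine le_of_forall_sub_le fun ε hε => le_liminf_of_le hu.isCoboundedUnder_ge ?_
  filter_upwards [h (ε / (C + 1)) (by positivity)] with x hx
  have : C * (ε / (C + 1)) ≤ ε := by
    rw [mul_div_assoc', div_le_iff₀ (by positivity)]
    nlinarith
  linarith

section RiemannStieltjesSums

variable {α : Type*} [MeasurableSpace α] {ν : Measure α} {A : ℕ → Set α} {n : ℕ}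

theorem sum_measureReal_sdiff_succ [IsFiniteMeasure ν] (hA : Monotone A)
    (hAm : ∀ i, MeasurableSet (A i)) (h0 : A 0 = ∅) (n : ℕ) :
    ∑ i ∈ Finset.range n, ν.real (A (i + 1) \ A i) = ν.real (A n) := by
  rw [Finset.sum_congr rfl fun i _ => measureReal_sdiff (μ := ν) (hA i.le_succ) (hAm i),
    Finset.sum_range_sub (fun i => ν.real (A i)), h0, measureReal_empty, sub_zero]

theorem sum_setIntegral_sdiff_succ {E : Type*} [NormedAddCommGroup E] [NormedSpace ℝ E]
    [CompleteSpace E] {f : α → E} (hA : Monotone A) (hAm : ∀ i, MeasurableSet (A i))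
    (h0 : A 0 = ∅) (hf : IntegrableOn f (A n) ν) :
    ∑ i ∈ Finset.range n, ∫ x in A (i + 1) \ A i, f x ∂ν = ∫ x in A n, f x ∂ν := by
  rw [Finset.sum_congr rfl fun i hi => setIntegral_sdiff (hAm i)
      (hf.mono_set (hA (Finset.mem_range.1 hi))) (hA i.le_succ),
    Finset.sum_range_sub (fun i => ∫ x in A i, f x ∂ν), h0, setIntegral_empty, sub_zero]

theorem abs_mul_measureReal_sub_setIntegral_le [IsFiniteMeasure ν] {s : Set α} {f : α → ℝ}
    {c ε : ℝ} (hf : IntegrableOn f s ν) (hfc : ∀ x ∈ s, |f x - c| ≤ ε) :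
    |c * ν.real s - ∫ x in s, f x ∂ν| ≤ ε * ν.real s := by
  rw [mul_comm, ← smul_eq_mul, ← setIntegral_const, ← integral_sub (integrableOn_const (C := c)) hf,
    ← Real.norm_eq_abs]
  refine norm_setIntegral_le_of_norm_le_const (measure_lt_top ν s) fun x hx => ?_
  rw [Real.norm_eq_abs, abs_sub_comm]
  exact hfc x hx

theorem abs_sum_mul_measureReal_sub_setIntegral_le [IsFiniteMeasure ν] (hA : Monotone A)
    (hAm : ∀ i, MeasurableSet (A i)) (h0 : A 0 = ∅) {f : α → ℝ} {c : ℕ → ℝ} {ε : ℝ}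
    (hf : IntegrableOn f (A n) ν) (hfc : ∀ i < n, ∀ x ∈ A (i + 1) \ A i, |f x - c i| ≤ ε) :
    |∑ i ∈ Finset.range n, c i * ν.real (A (i + 1) \ A i) - ∫ x in A n, f x ∂ν| ≤
      ε * ν.real (A n) := by
  rw [← sum_setIntegral_sdiff_succ hA hAm h0 hf, ← sum_measureReal_sdiff_succ hA hAm h0,
    Finset.mul_sum, ← Finset.sum_sub_distrib]
  refine (Finset.abs_sum_le_sum_abs _ _).trans (Finset.sum_le_sum fun i hi => ?_)
  have hi := Finset.mem_range.1 hi
  exact abs_mul_measureReal_sub_setIntegral_le (hf.mono_set ((hA hi).trans' sdiff_subset))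
    (hfc i hi)

theorem abs_sum_mul_apply_sdiff_sub_le (μ : SignedMeasure α) (hA : Monotone A)
    (hAm : ∀ i, MeasurableSet (A i)) (h0 : A 0 = ∅) {f : α → ℝ} {c : ℕ → ℝ} {ε : ℝ}
    (hf : IntegrableOn f (A n) μ.totalVariation)
    (hfc : ∀ i < n, ∀ x ∈ A (i + 1) \ A i, |f x - c i| ≤ ε) :
    |∑ i ∈ Finset.range n, c i * μ (A (i + 1) \ A i) -
        ((∫ x in A n, f x ∂μ.toJordanDecomposition.posPart) -
          ∫ x in A n, f x ∂μ.toJordanDecomposition.negPart)| ≤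
      ε * μ.totalVariation.real (A n) := by
  set P := μ.toJordanDecomposition.posPart
  set N := μ.toJordanDecomposition.negPart
  have hP := abs_sum_mul_measureReal_sub_setIntegral_le (ν := P) hA hAm h0
    (hf.mono_measure (Measure.le_add_right le_rfl)) hfc
  have hN := abs_sum_mul_measureReal_sub_setIntegral_le (ν := N) hA hAm h0
    (hf.mono_measure (Measure.le_add_left le_rfl)) hfc
  have hsplit : ∑ i ∈ Finset.range n, c i * μ (A (i + 1) \ A i) =
      ∑ i ∈ Finset.range n, c i * P.real (A (i + 1) \ A i) -
        ∑ i ∈ Finset.range n, c i * N.real (A (i + 1) \ A i) := by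
    simp only [μ.apply_eq_posPart_real_sub_negPart_real ((hAm _).diff (hAm _)), mul_sub,
      Finset.sum_sub_distrib, P, N]
  rw [hsplit, SignedMeasure.totalVariation, measureReal_add_apply, mul_add]
  obtain ⟨hP₁, hP₂⟩ := abs_le.1 hP
  obtain ⟨hN₁, hN₂⟩ := abs_le.1 hN
  exact abs_le.2 ⟨by linarith, by linarith⟩

theorem sum_mul_abs_apply_sdiff_le (μ : SignedMeasure α) (hA : Monotone A)
    (hAm : ∀ i, MeasurableSet (A i)) (h0 : A 0 = ∅) {f : α → ℝ} {c : ℕ → ℝ} {ε : ℝ}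
    (hc : ∀ i < n, 0 ≤ c i) (hf : IntegrableOn f (A n) μ.totalVariation)
    (hfc : ∀ i < n, ∀ x ∈ A (i + 1) \ A i, |f x - c i| ≤ ε) :
    ∑ i ∈ Finset.range n, c i * |μ (A (i + 1) \ A i)| ≤
      ∫ x in A n, f x ∂μ.totalVariation + ε * μ.totalVariation.real (A n) := by
  calc ∑ i ∈ Finset.range n, c i * |μ (A (i + 1) \ A i)|
      ≤ ∑ i ∈ Finset.range n, c i * μ.totalVariation.real (A (i + 1) \ A i) :=
        Finset.sum_le_sum fun i hi =>
          mul_le_mul_of_nonneg_left (μ.norm_le_totalVariation _) (hc i (Finset.mem_range.1 hi))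
    _ ≤ _ := by
      linarith [(abs_le.1 (abs_sum_mul_measureReal_sub_setIntegral_le hA hAm h0 hf hfc)).2]

end RiemannStieltjesSums

section Grid

variable {T : ℝ} {n i : ℕ}

/-- The time at which `γ̄^n` samples `γ` on its `i`-th cell `[iT/n, (i+1)T/n)`. The conventions
`γ̄^n = 0` on the first cell and at `T` are encoded by the negative time `-T/n` for `i = 0`
(where `γ_{0−} = 0`) and by `T` for `i ≥ n` (where `γ_T = 0`). -/
noncomputable def samplingTime (T : ℝ) (n i : ℕ) : ℝ :=
  if n ≤ i then T else ((i : ℝ) - 1) * T / n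

theorem samplingTime_self (T : ℝ) (n : ℕ) : samplingTime T n n = T := if_pos le_rfl

theorem samplingTime_zero_neg (hT : 0 < T) (hn : 0 < n) : samplingTime T n 0 < 0 := by
  rw [samplingTime, if_neg (by omega), Nat.cast_zero, zero_sub, neg_one_mul, neg_div]
  have : (0 : ℝ) < n := by exact_mod_cast hn
  exact neg_neg_of_pos (by positivity)

theorem samplingTime_le (hT : 0 ≤ T) (n i : ℕ) : samplingTime T n i ≤ T := by
  unfold samplingTime
  split_ifs with h
  · exact le_rfl
  · have hn : (0 : ℝ) < n := by exact_mod_cast (by omega : 0 < n)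
    have hi : (i : ℝ) - 1 ≤ n := by
      have : (i : ℝ) ≤ n := by exact_mod_cast (by omega : i ≤ n)
      linarith
    rw [div_le_iff₀ hn]
    nlinarith

theorem samplingTime_succ_le (hT : 0 ≤ T) (hi : i < n) :
    samplingTime T n (i + 1) ≤ ((i : ℝ) + 1) * T / n := by
  have hn : (0 : ℝ) < n := by exact_mod_cast (by omega : 0 < n)
  unfold samplingTime
  split_ifs with h
  · have : (n : ℝ) ≤ i + 1 := by exact_mod_cast h
    rw [le_div_iff₀ hn]
    nlinarith
  · push_cast
    gcongr
    linarith

theorem monotone_samplingTime (hT : 0 ≤ T) : Monotone (samplingTime T n) := by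
  refine monotone_nat_of_le_succ fun i => ?_
  have hle := samplingTime_le hT n i
  unfold samplingTime at hle ⊢
  split_ifs at hle ⊢ with h h' h'
  · exact le_rfl
  · omega
  · exact hle
  · push_cast
    gcongr
    linarith

theorem bval_eq_apply_samplingTime {γ : ℝ → ℝ} (hT : 0 < T) (hγ₀ : ∀ t < 0, γ t = 0)
    (hγT : γ T = 0) (n i : ℕ) : bval T γ n i = γ (samplingTime T n i) := by
  by_cases hni : n ≤ i
  · rw [bval, if_pos (Or.inr hni), samplingTime, if_pos hni, hγT]
  rcases Nat.eq_zero_or_pos i with rfl | hi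
  · rw [bval, if_pos (Or.inl rfl), hγ₀ _ (samplingTime_zero_neg hT (by omega))]
  · rw [bval, if_neg (by omega), samplingTime, if_neg hni]

def gridCell (T : ℝ) (n i : ℕ) : Set ℝ :=
  Icc 0 (samplingTime T n (i + 1)) \ Icc 0 (samplingTime T n i)

theorem gridPoint_mem_Icc (hT : 0 ≤ T) (hi : i < n) : ((i : ℝ) + 1) * T / n ∈ Icc 0 T := by
  have hn : (0 : ℝ) < n := by exact_mod_cast (by omega : 0 < n)
  have : (i : ℝ) + 1 ≤ n := by exact_mod_cast hi
  refine ⟨by positivity, ?_⟩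
  rw [div_le_iff₀ hn]
  nlinarith

theorem abs_sub_gridPoint_le_of_mem_gridCell (hT : 0 ≤ T) (hi : i < n) {u : ℝ}
    (hu : u ∈ gridCell T n i) : |u - ((i : ℝ) + 1) * T / n| ≤ 2 * T / n := by
  obtain ⟨⟨hu₀, hu₁⟩, hu₂⟩ := hu
  have hlow : ((i : ℝ) - 1) * T / n < u := by
    rw [samplingTime, if_neg (by omega)] at hu₂
    exact not_le.1 fun h => hu₂ ⟨hu₀, h⟩
  have hup := hu₁.trans (samplingTime_succ_le hT hi)
  have : ((i : ℝ) - 1) * T / n = ((i : ℝ) + 1) * T / n - 2 * T / n := by ring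
  have : 0 ≤ 2 * T / n := by positivity
  exact abs_le.2 ⟨by linarith, by linarith⟩

theorem gridCell_subset_Icc (hT : 0 ≤ T) : gridCell T n i ⊆ Icc 0 T :=
  sdiff_subset.trans (Icc_subset_Icc le_rfl (samplingTime_le hT n _))

end Grid

section DiscreteTerminalValue

variable {T : ℝ} {S : ℝ → ℝ} {μ : SignedMeasure ℝ} {n : ℕ} {ε : ℝ}

theorem discreteTerminalValue_eq (hT : 0 < T) (hliq : μ (Icc 0 T) = 0) (κ : ℝ) (S : ℝ → ℝ)
    (n : ℕ) :
    discreteTerminalValue T κ S (fun u => μ (Icc 0 u)) n =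
      -(∑ i ∈ Finset.range n, S (((i : ℝ) + 1) * T / n) * μ (gridCell T n i)) -
        κ * ∑ i ∈ Finset.range n, S (((i : ℝ) + 1) * T / n) * |μ (gridCell T n i)| := by
  have hγ₀ (t : ℝ) (ht : t < 0) : μ (Icc 0 t) = 0 := by simp [Icc_eq_empty_of_lt ht]
  have hjump (i : ℕ) : bval T (fun u => μ (Icc 0 u)) n (i + 1) -
      bval T (fun u => μ (Icc 0 u)) n i = μ (gridCell T n i) := by
    simp only [bval_eq_apply_samplingTime hT hγ₀ hliq]
    exact (VectorMeasure.of_sdiff measurableSet_Icc measurableSet_Icc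
      (Icc_subset_Icc le_rfl (monotone_samplingTime hT.le i.le_succ))).symm
  simp only [discreteTerminalValue, hjump]

theorem eventually_abs_sub_gridPoint_le (hT : 0 < T) (hS : ContinuousOn S (Icc 0 T))
    (hε : 0 < ε) : ∀ᶠ n in atTop, ∀ i < n, ∀ u ∈ gridCell T n i,
      |S u - S (((i : ℝ) + 1) * T / n)| ≤ ε := by
  obtain ⟨δ, hδ, hSδ⟩ := Metric.uniformContinuousOn_iff_le.1
    (isCompact_Icc.uniformContinuousOn_of_continuous hS) ε hε
  filter_upwards [(tendsto_const_div_atTop_nhds_zero_nat (2 * T)).eventually (ge_mem_nhds hδ)]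
    with n hn i hi u hu
  exact hSδ u (gridCell_subset_Icc hT.le hu) _ (gridPoint_mem_Icc hT.le hi)
    ((abs_sub_gridPoint_le_of_mem_gridCell hT.le hi hu).trans hn)

theorem abs_sum_sub_stieltjesIntegral_le (hT : 0 < T) (hS : ContinuousOn S (Icc 0 T))
    (hn : 0 < n)
    (hosc : ∀ i < n, ∀ u ∈ gridCell T n i, |S u - S (((i : ℝ) + 1) * T / n)| ≤ ε) :
    |∑ i ∈ Finset.range n, S (((i : ℝ) + 1) * T / n) * μ (gridCell T n i) -
        stieltjesIntegral S μ T| ≤ ε * μ.totalVariation.real (Icc 0 T) := by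
  have := abs_sum_mul_apply_sdiff_sub_le μ (A := fun i => Icc 0 (samplingTime T n i))
    (fun i j hij => Icc_subset_Icc le_rfl (monotone_samplingTime hT.le hij))
    (fun _ => measurableSet_Icc) (Icc_eq_empty_of_lt (samplingTime_zero_neg hT hn))
    (by rw [samplingTime_self]; exact hS.integrableOn_compact isCompact_Icc) hosc
  rwa [samplingTime_self] at this

theorem sum_mul_abs_le_totalVarIntegral_add (hT : 0 < T) (hS : ContinuousOn S (Icc 0 T))
    (hS₀ : ∀ t ∈ Icc 0 T, 0 ≤ S t) (hn : 0 < n)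
    (hosc : ∀ i < n, ∀ u ∈ gridCell T n i, |S u - S (((i : ℝ) + 1) * T / n)| ≤ ε) :
    ∑ i ∈ Finset.range n, S (((i : ℝ) + 1) * T / n) * |μ (gridCell T n i)| ≤
      totalVarIntegral S μ T + ε * μ.totalVariation.real (Icc 0 T) := by
  have := sum_mul_abs_apply_sdiff_le μ (A := fun i => Icc 0 (samplingTime T n i))
    (fun i j hij => Icc_subset_Icc le_rfl (monotone_samplingTime hT.le hij))
    (fun _ => measurableSet_Icc) (Icc_eq_empty_of_lt (samplingTime_zero_neg hT hn))
    (fun i hi => hS₀ _ (gridPoint_mem_Icc hT.le hi))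
    (by rw [samplingTime_self]; exact hS.integrableOn_compact isCompact_Icc) hosc
  rwa [samplingTime_self] at this

variable {κ : ℝ}

theorem terminalValue_sub_le_discreteTerminalValue (hT : 0 < T) (hκ : 0 ≤ κ)
    (hS : ContinuousOn S (Icc 0 T)) (hS₀ : ∀ t ∈ Icc 0 T, 0 ≤ S t) (hliq : μ (Icc 0 T) = 0)
    (hn : 0 < n)
    (hosc : ∀ i < n, ∀ u ∈ gridCell T n i, |S u - S (((i : ℝ) + 1) * T / n)| ≤ ε) :
    -(stieltjesIntegral S μ T) - κ * totalVarIntegral S μ T -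
        (1 + κ) * μ.totalVariation.real (Icc 0 T) * ε ≤
      discreteTerminalValue T κ S (fun u => μ (Icc 0 u)) n := by
  have hsigned := (abs_le.1 (abs_sum_sub_stieltjesIntegral_le (μ := μ) hT hS hn hosc)).2
  have habs := mul_le_mul_of_nonneg_left
    (sum_mul_abs_le_totalVarIntegral_add (μ := μ) hT hS hS₀ hn hosc) hκ
  rw [discreteTerminalValue_eq hT hliq]
  linarith

theorem discreteTerminalValue_le (hT : 0 < T) (hκ : 0 ≤ κ)
    (hS : ContinuousOn S (Icc 0 T)) (hS₀ : ∀ t ∈ Icc 0 T, 0 ≤ S t) (hliq : μ (Icc 0 T) = 0)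
    (hn : 0 < n)
    (hosc : ∀ i < n, ∀ u ∈ gridCell T n i, |S u - S (((i : ℝ) + 1) * T / n)| ≤ ε) :
    discreteTerminalValue T κ S (fun u => μ (Icc 0 u)) n ≤
      -(stieltjesIntegral S μ T) + ε * μ.totalVariation.real (Icc 0 T) := by
  have hsigned := (abs_le.1 (abs_sum_sub_stieltjesIntegral_le (μ := μ) hT hS hn hosc)).1
  have habs : 0 ≤ κ * ∑ i ∈ Finset.range n, S (((i : ℝ) + 1) * T / n) * |μ (gridCell T n i)| :=
    mul_nonneg hκ <| Finset.sum_nonneg fun i hi =>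
      mul_nonneg (hS₀ _ (gridPoint_mem_Icc hT.le (Finset.mem_range.1 hi))) (abs_nonneg _)
  rw [discreteTerminalValue_eq hT hliq]
  linarith

end DiscreteTerminalValue

/-- Inequality (4.5) in Step 2 of the proof of Lemma 4.2 of the paper: for a strategy `γ`
(encoded by the signed measure `μ`, `γ_t = μ([0,t])`) with `γ_T = 0`, the terminal value
`V^γ_T = −∫_{[0,T]} S dγ − κ∫_{[0,T]} S |dγ|` satisfies
`V^γ_T ≤ liminf_n V^{γ̄^n}_T` for the discretized strategies `γ̄^n`. -/
theorem stmt_10 (T κ : ℝ) (hT : 0 < T) (hκ : κ ∈ Set.Ioo (0:ℝ) 1)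
    (S : ℝ → ℝ) (hS : ContinuousOn S (Icc 0 T)) (hSpos : ∀ t ∈ Icc (0:ℝ) T, 0 < S t)
    (μ : SignedMeasure ℝ) (hliq : μ (Icc 0 T) = 0) :
    -(stieltjesIntegral S μ T) - κ * totalVarIntegral S μ T ≤
      Filter.liminf
        (fun n => discreteTerminalValue T κ S (fun u => μ (Icc 0 u)) n)
        Filter.atTop := by
  obtain ⟨hκ₀, -⟩ := hκ
  have hS₀ : ∀ t ∈ Icc 0 T, 0 ≤ S t := fun t ht => (hSpos t ht).le
  have hosc {ε : ℝ} (hε : 0 < ε) :=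
    (eventually_abs_sub_gridPoint_le hT hS hε).and (eventually_gt_atTop 0)
  refine le_liminf_of_forall_eventually_sub_mul_le (C := (1 + κ) * μ.totalVariation.real (Icc 0 T))
    ?_ (mul_nonneg (by linarith) measureReal_nonneg) fun ε hε => ?_
  · exact ⟨_, eventually_map.2 <| (hosc one_pos).mono fun n h =>
      discreteTerminalValue_le hT hκ₀.le hS hS₀ hliq h.2 h.1⟩
  · filter_upwards [hosc hε] with n h
    exact terminalValue_sub_le_discreteTerminalValue hT hκ₀.le hS hS₀ hliq h.2 h.1
end
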